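/- arXiv:1907.10903 — 2 statements merged into one kernel-verified Lean document; each statement's English description precedes it below -/
import Mathlib

section
/- Let M = {E·C : C ∈ R^{M×C}} with EᵀE = I_M, and suppose M is invariant under right multiplication by W ∈ R^{C×C} (i.e., Y ∈ M implies Y·W ∈ M). If W has largest singular value at most s, then d_M(H·W) ≤ s·d_M(H) for every H ∈ R^{N×C}. -/
open Matrix

/-- Frobenius norm of a real matrix. -/
noncomputable def fro {n m : ℕ} (X : Matrix (Fin n) (Fin m) ℝ) : ℝ :=
  Real.sqrt (∑ i, ∑ j, (X i j) ^ 2)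

/-- Euclidean norm of a real vector. -/
noncomputable def en {n : ℕ} (x : Fin n → ℝ) : ℝ :=
  Real.sqrt (∑ i, (x i) ^ 2)

/-- Frobenius distance from `X` to the subspace `{E * C}`. -/
noncomputable def dM {N M C : ℕ} (E : Matrix (Fin N) (Fin M) ℝ)
    (X : Matrix (Fin N) (Fin C) ℝ) : ℝ :=
  ⨅ Y : Matrix (Fin M) (Fin C) ℝ, fro (X - E * Y)


lemma fro_nonneg {n m : ℕ} (X : Matrix (Fin n) (Fin m) ℝ) : 0 ≤ fro X := Real.sqrt_nonneg _

lemma en_sq {n : ℕ} (x : Fin n → ℝ) : (en x) ^ 2 = ∑ i, (x i) ^ 2 :=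
  Real.sq_sqrt (Finset.sum_nonneg fun i _ => sq_nonneg _)

lemma fro_mul_le {n C : ℕ} (W : Matrix (Fin C) (Fin C) ℝ) (s : ℝ) (hs : 0 ≤ s)
    (hW : ∀ x : Fin C → ℝ, en (Matrix.vecMul x W) ≤ s * en x)
    (X : Matrix (Fin n) (Fin C) ℝ) : fro (X * W) ≤ s * fro X := by
  have h1 : ∀ i, ∑ j, ((X * W) i j) ^ 2 ≤ s ^ 2 * ∑ j, (X i j) ^ 2 := by
    intro i
    have hrow : (fun j => (X * W) i j) = Matrix.vecMul (X i) W := by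
      funext j; simp [Matrix.mul_apply, Matrix.vecMul, dotProduct]
    calc ∑ j, ((X * W) i j) ^ 2 = (en (Matrix.vecMul (X i) W)) ^ 2 := by
          rw [en_sq, ← hrow]
      _ ≤ (s * en (X i)) ^ 2 :=
          pow_le_pow_left₀ (Real.sqrt_nonneg _) (hW _) 2
      _ = s ^ 2 * ∑ j, (X i j) ^ 2 := by rw [mul_pow, en_sq]
  have h2 : fro (X * W) ≤ Real.sqrt (s ^ 2 * ∑ i, ∑ j, (X i j) ^ 2) := by
    apply Real.sqrt_le_sqrt
    rw [Finset.mul_sum]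
    exact Finset.sum_le_sum fun i _ => h1 i
  calc fro (X * W) ≤ _ := h2
    _ = s * fro X := by
        rw [Real.sqrt_mul (sq_nonneg s), Real.sqrt_sq hs]; rfl

/-- If the subspace `M = {E·C}` is invariant under right multiplication by `W`, and the
largest singular value of `W` is at most `s`, then `d_M(H·W) ≤ s · d_M(H)`. -/
theorem dist_mul_right_le {N M C : ℕ} (E : Matrix (Fin N) (Fin M) ℝ)
    (hE : Eᵀ * E = 1) (W : Matrix (Fin C) (Fin C) ℝ) (s : ℝ)
    (hInv : ∀ Y : Matrix (Fin M) (Fin C) ℝ, ∃ Z : Matrix (Fin M) (Fin C) ℝ,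
      (E * Y) * W = E * Z)
    (hW : ∀ x : Fin C → ℝ, en (Matrix.vecMul x W) ≤ s * en x)
    (H : Matrix (Fin N) (Fin C) ℝ) :
    dM E (H * W) ≤ s * dM E H := by
  rcases Nat.eq_zero_or_pos C with hC | hC
  · subst hC
    have hf : ∀ {n : ℕ} (X : Matrix (Fin n) (Fin 0) ℝ), fro X = 0 := by
      intro n X; simp [fro]
    simp [dM, hf, ciInf_const]
  · have hs : 0 ≤ s := by
      have h := hW (Pi.single ⟨0, hC⟩ 1)
      have hx : en (Pi.single (⟨0, hC⟩ : Fin C) (1 : ℝ)) = 1 := by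
        simp [en, Pi.single_apply]
      rw [hx, mul_one] at h
      exact le_trans (Real.sqrt_nonneg _) h
    have bdd : BddBelow (Set.range fun Z : Matrix (Fin M) (Fin C) ℝ => fro (H * W - E * Z)) :=
      ⟨0, by rintro _ ⟨Z, rfl⟩; exact fro_nonneg _⟩
    rw [dM, dM, Real.mul_iInf_of_nonneg hs]
    apply le_ciInf
    intro Y
    obtain ⟨Z, hZ⟩ := hInv Y
    calc (⨅ Z, fro (H * W - E * Z)) ≤ fro (H * W - E * Z) := ciInf_le bdd Z
      _ = fro ((H - E * Y) * W) := by rw [Matrix.sub_mul, hZ]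
      _ ≤ s * fro (H - E * Y) := fro_mul_le W s hs hW _
end

section
/- Let G be a finite connected undirected graph with unit edge resistances and let λ be the second largest eigenvalue (in the sense of the paper: the largest absolute value among eigenvalues excluding the top eigenvalue 1) of the random-walk-normalized adjacency/transition matrix. Then for any two nodes s, t with degrees d_s, d_t and effective resistance R_{st}, the inequality λ ≥ 1 − (1/R_{st})·(1/d_s + 1/d_t) holds. -/
/-!
Let `φ` be the potential of the unit `s`–`t` current, i.e. `L φ = e_s - e_t`, shifted so that
`∑ dᵢ φᵢ = 0`. By Thomson's principle `R_{st} = φ_s - φ_t = φᵀ L φ`, so with `Q = φᵀ D φ` the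
Rayleigh quotient of `φ` for `A = D - L` is `1 - R_{st} / Q`. The transition matrix `P = D⁻¹ A` is
reversible with respect to `D`, its eigenvalue-`1` eigenvectors are the constants (connectivity),
and `φ` is `D`-orthogonal to them; hence some eigenvalue `μ ≠ 1` of `P` dominates this Rayleigh
quotient. Cauchy–Schwarz at `s` and `t` gives `R_{st}² ≤ (1/d_s + 1/d_t) Q`, and therefore
`λ ≥ μ ≥ 1 - R_{st} / Q ≥ 1 - (1/d_s + 1/d_t) / R_{st}`.
-/

open Matrix

/-- `f` is a unit flow from `s` to `t` on the graph `G`. -/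
def IsUnitFlow {N : ℕ} (G : SimpleGraph (Fin N)) (s t : Fin N)
    (f : Fin N → Fin N → ℝ) : Prop :=
  (∀ i j, f i j = - f j i) ∧ (∀ i j, ¬ G.Adj i j → f i j = 0) ∧
  (∀ i, ∑ j, f i j = if i = s then 1 else if i = t then -1 else 0)

/-- Energy dissipated by the flow `f` with unit resistances. -/
noncomputable def flowEnergy {N : ℕ} (f : Fin N → Fin N → ℝ) : ℝ :=
  (∑ i, ∑ j, (f i j) ^ 2) / 2

/-- Effective resistance between `s` and `t` with unit edge resistances (Thomson's
principle). -/
noncomputable def effRes {N : ℕ} (G : SimpleGraph (Fin N)) (s t : Fin N) : ENNReal :=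
  ⨅ (f : Fin N → Fin N → ℝ) (_ : IsUnitFlow G s t f), ENNReal.ofReal (flowEnergy f)

open Module End

theorem LinearMap.IsSymmetric.exists_hasEigenvalue_ne_inner_le_mul_norm_sq
    {E : Type*} [NormedAddCommGroup E] [InnerProductSpace ℝ E] [FiniteDimensional ℝ E]
    {T : E →ₗ[ℝ] E} (hT : T.IsSymmetric) {a : ℝ} {x : E} (hx0 : x ≠ 0)
    (hx : x ∈ (eigenspace T a)ᗮ) :
    ∃ μ, μ ≠ a ∧ HasEigenvalue T μ ∧ inner ℝ (T x) x ≤ μ * ‖x‖ ^ 2 := by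
  set b := hT.eigenvectorBasis rfl
  set μ := hT.eigenvalues rfl
  set c : Fin (finrank ℝ E) → ℝ := fun i => inner ℝ (b i) x
  have hTb : ∀ i, T (b i) = μ i • b i := hT.apply_eigenvectorBasis rfl
  have hc : ∀ i, μ i = a → c i = 0 := fun i hi =>
    Submodule.inner_right_of_mem_orthogonal (mem_eigenspace_iff.2 (hi ▸ hTb i)) hx
  have hnorm : ‖x‖ ^ 2 = ∑ i, c i ^ 2 := by
    rw [← real_inner_self_eq_norm_sq, ← b.sum_inner_mul_inner x x]
    simp only [c, real_inner_comm x, sq]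
  have hinner : inner ℝ (T x) x = ∑ i, μ i * c i ^ 2 := by
    rw [← b.sum_inner_mul_inner (T x) x]
    refine Finset.sum_congr rfl fun i _ => ?_
    rw [hT, hTb, inner_smul_right, real_inner_comm]
    ring
  obtain ⟨k, hk, hkmax⟩ := Finset.exists_max_image {i | c i ≠ 0} μ <| by
    by_contra! h
    refine hx0 ?_
    rw [← b.sum_repr' x]
    refine Finset.sum_eq_zero fun i _ => ?_
    have hci : c i = 0 := by simpa using Finset.filter_eq_empty_iff.1 h (Finset.mem_univ i)
    rw [show inner ℝ (b i) x = 0 from hci, zero_smul]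
  refine ⟨μ k, fun h => (Finset.mem_filter.1 hk).2 (hc k h), hT.hasEigenvalue_eigenvalues rfl k, ?_⟩
  rw [hinner, hnorm, Finset.mul_sum]
  refine Finset.sum_le_sum fun i _ => ?_
  by_cases hi : c i = 0
  · simp [hi]
  · exact mul_le_mul_of_nonneg_right (hkmax i (by simpa using hi)) (sq_nonneg _)

namespace Matrix

variable {n : Type*}

/-- `D^{1/2} P D^{-1/2}` for `D = diagonal π`. -/
noncomputable def sqrtDiagConj (P : Matrix n n ℝ) (π : n → ℝ) : Matrix n n ℝ :=
  of fun i j => √(π i) * P i j / √(π j)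

variable {P : Matrix n n ℝ} {π : n → ℝ}

theorem isHermitian_sqrtDiagConj (hπ : ∀ i, 0 < π i) (hrev : ∀ i j, π i * P i j = π j * P j i) :
    (P.sqrtDiagConj π).IsHermitian := by
  ext i j
  have hji := hrev j i
  rw [← Real.mul_self_sqrt (hπ i).le, ← Real.mul_self_sqrt (hπ j).le] at hji
  simp only [sqrtDiagConj, conjTranspose_apply, of_apply, star_trivial]
  rw [div_eq_div_iff (Real.sqrt_pos.2 (hπ i)).ne' (Real.sqrt_pos.2 (hπ j)).ne']
  linear_combination hji

theorem mulVec_div_sqrt_eq_smul [Fintype n] (hπ : ∀ i, 0 < π i) {w : n → ℝ} {c : ℝ}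
    (hw : P.sqrtDiagConj π *ᵥ w = c • w) :
    P *ᵥ (fun i => w i / √(π i)) = c • fun i => w i / √(π i) := by
  ext i
  have hi := congr_fun hw i
  have hs : ∀ j, √(π j) ≠ 0 := fun j => (Real.sqrt_pos.2 (hπ j)).ne'
  simp only [sqrtDiagConj, mulVec, dotProduct, of_apply, Pi.smul_apply, smul_eq_mul] at hi ⊢
  rw [mul_div_assoc', ← hi, eq_div_iff (hs i), Finset.sum_mul]
  refine Finset.sum_congr rfl fun j _ => ?_
  field_simp [hs j]

theorem exists_hasEigenvalue_ne_of_reversible [Fintype n] [DecidableEq n] (hπ : ∀ i, 0 < π i)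
    (hrev : ∀ i j, π i * P i j = π j * P j i) {a : ℝ} {x : n → ℝ} (hx0 : x ≠ 0)
    (hx : ∀ y, P *ᵥ y = a • y → ∑ i, π i * y i * x i = 0) :
    ∃ μ, μ ≠ a ∧ HasEigenvalue (toLin' P) μ ∧
      ∑ i, π i * x i * (P *ᵥ x) i ≤ μ * ∑ i, π i * x i ^ 2 := by
  have hs : ∀ i, 0 < √(π i) := fun i => Real.sqrt_pos.2 (hπ i)
  have hss : ∀ i, √(π i) * √(π i) = π i := fun i => Real.mul_self_sqrt (hπ i).le
  set T := toEuclideanLin (P.sqrtDiagConj π)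
  have hT : T.IsSymmetric := isSymmetric_toEuclideanLin_iff.2 (isHermitian_sqrtDiagConj hπ hrev)
  have pullback : ∀ (w : EuclideanSpace ℝ n) (c : ℝ), T w = c • w →
      P *ᵥ (fun i => w i / √(π i)) = c • fun i => w i / √(π i) :=
    fun w c hw => mulVec_div_sqrt_eq_smul hπ congr(WithLp.ofLp $hw)
  set g : EuclideanSpace ℝ n := WithLp.toLp 2 fun i => √(π i) * x i
  have hg0 : g ≠ 0 := by
    refine fun h => hx0 (funext fun i => ?_)
    have := congr($h i)
    simp only [g, PiLp.zero_apply, mul_eq_zero] at this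
    exact this.resolve_left (hs i).ne'
  have hg : g ∈ (eigenspace T a)ᗮ := by
    intro w hw
    rw [← hx _ (pullback w a (mem_eigenspace_iff.1 hw)), PiLp.inner_apply]
    refine Finset.sum_congr rfl fun i _ => ?_
    simp only [g, RCLike.inner_apply, conj_trivial]
    field_simp [(hs i).ne']
    linear_combination x i * w i * hss i
  have hTg : inner ℝ (T g) g = ∑ i, π i * x i * (P *ᵥ x) i := by
    rw [PiLp.inner_apply]
    refine Finset.sum_congr rfl fun i _ => ?_
    simp only [T, sqrtDiagConj, g, ofLp_toLpLin, toLin'_apply, RCLike.inner_apply, conj_trivial,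
      mulVec, dotProduct, of_apply, Finset.mul_sum]
    refine Finset.sum_congr rfl fun j _ => ?_
    field_simp [(hs j).ne']
    linear_combination x i * P i j * x j * hss i
  have hgg : ‖g‖ ^ 2 = ∑ i, π i * x i ^ 2 := by
    rw [EuclideanSpace.norm_sq_eq]
    refine Finset.sum_congr rfl fun i _ => ?_
    simp only [g, Real.norm_eq_abs, sq_abs]
    linear_combination x i ^ 2 * hss i
  obtain ⟨μ, hμa, hμ, hray⟩ := hT.exists_hasEigenvalue_ne_inner_le_mul_norm_sq hg0 hg
  refine ⟨μ, hμa, ?_, hTg ▸ hgg ▸ hray⟩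
  obtain ⟨w, hw, hw0⟩ := hμ.exists_hasEigenvector
  refine hasEigenvalue_of_hasEigenvector (x := fun i => w i / √(π i)) ⟨mem_eigenspace_iff.2 ?_, ?_⟩
  · rw [toLin'_apply]; exact pullback w μ (mem_eigenspace_iff.1 hw)
  · refine fun h => hw0 (PiLp.ext fun i => ?_)
    have := congr_fun h i
    simp only [Pi.zero_apply, div_eq_zero_iff] at this
    exact this.resolve_right (hs i).ne'

end Matrix

def unitDemand {V : Type*} [DecidableEq V] (s t : V) : V → ℝ :=
  fun i => if i = s then 1 else if i = t then -1 else 0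

section UnitDemand

variable {V : Type*} [Fintype V] [DecidableEq V] {s t : V}

theorem sum_unitDemand (hst : s ≠ t) : ∑ i, unitDemand s t i = 0 := by
  simp [unitDemand, Finset.sum_ite, Finset.filter_ne', Finset.filter_eq', hst.symm]

theorem dotProduct_unitDemand (hst : s ≠ t) (ψ : V → ℝ) : ψ ⬝ᵥ unitDemand s t = ψ s - ψ t := by
  simp [dotProduct, unitDemand, mul_ite, Finset.sum_ite, Finset.filter_ne', Finset.filter_eq',
    hst.symm, sub_eq_add_neg]

end UnitDemand

namespace SimpleGraph

variable {V : Type*} [Fintype V] (G : SimpleGraph V) [DecidableRel G.Adj]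

def potentialFlow (φ : V → ℝ) (i j : V) : ℝ := if G.Adj i j then φ i - φ j else 0

theorem sum_potentialFlow [DecidableEq V] (φ : V → ℝ) (i : V) :
    ∑ j, G.potentialFlow φ i j = (G.lapMatrix ℝ *ᵥ φ) i := by
  simp only [lapMatrix_mulVec_apply, potentialFlow]
  rw [← Finset.sum_filter, ← neighborFinset_eq_filter,
    Finset.sum_sub_distrib, Finset.sum_const, card_neighborFinset_eq_degree, nsmul_eq_mul]

theorem sub_pos_of_lapMatrix_mulVec_eq_unitDemand [DecidableEq V] {s t : V} (hst : s ≠ t)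
    {φ : V → ℝ} (hφ : G.lapMatrix ℝ *ᵥ φ = unitDemand s t) : 0 < φ s - φ t := by
  have hR : φ ⬝ᵥ (G.lapMatrix ℝ *ᵥ φ) = φ s - φ t := by rw [hφ, dotProduct_unitDemand hst]
  have hpsd := posSemidef_lapMatrix ℝ G
  refine hR ▸ lt_of_le_of_ne (by simpa using hpsd.dotProduct_mulVec_nonneg φ) fun h => ?_
  have h0 := (hpsd.toLinearMap₂'_zero_iff φ).1 (by simpa [toLinearMap₂'_apply'] using h.symm)
  simpa [hφ, unitDemand] using congr_fun h0 s

noncomputable def transitionMatrix : Matrix V V ℝ :=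
  of fun i j => (if G.Adj i j then (1 : ℝ) else 0) / G.degree i

theorem degree_mul_transitionMatrix (i j : V) :
    (G.degree i : ℝ) * G.transitionMatrix i j = G.adjMatrix ℝ i j := by
  by_cases h : G.Adj i j
  · have : (G.degree i : ℝ) ≠ 0 := by
      exact_mod_cast (G.degree_pos_iff_exists_adj i).2 ⟨j, h⟩ |>.ne'
    simp [transitionMatrix, h, this]
  · simp [transitionMatrix, h]

theorem degree_mul_transitionMatrix_mulVec (x : V → ℝ) (i : V) :
    (G.degree i : ℝ) * (G.transitionMatrix *ᵥ x) i = (G.adjMatrix ℝ *ᵥ x) i := by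
  simp only [mulVec, dotProduct, Finset.mul_sum, ← mul_assoc, degree_mul_transitionMatrix]

theorem lapMatrix_mulVec_eq_zero_of_transitionMatrix_mulVec_eq_self [DecidableEq V] {y : V → ℝ}
    (hy : G.transitionMatrix *ᵥ y = y) : G.lapMatrix ℝ *ᵥ y = 0 := by
  ext i
  rw [lapMatrix, sub_mulVec, Pi.sub_apply, degMatrix_mulVec_apply,
    ← degree_mul_transitionMatrix_mulVec, hy, sub_self, Pi.zero_apply]

theorem dotProduct_adjMatrix_mulVec [DecidableEq V] (x : V → ℝ) :
    x ⬝ᵥ (G.adjMatrix ℝ *ᵥ x) = ∑ i, (G.degree i : ℝ) * x i ^ 2 - x ⬝ᵥ (G.lapMatrix ℝ *ᵥ x) := by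
  simp only [lapMatrix, sub_mulVec, dotProduct_sub, dotProduct_mulVec_degMatrix, sq, mul_assoc]
  ring

variable {G} [DecidableEq V]

theorem Connected.exists_lapMatrix_mulVec_eq (hG : G.Connected) {b : V → ℝ}
    (hb : ∑ i, b i = 0) : ∃ φ, G.lapMatrix ℝ *ᵥ φ = b := by
  set T := toEuclideanLin (G.lapMatrix ℝ)
  have hT : T.IsSymmetric := isSymmetric_toEuclideanLin_iff.2 (G.isHermitian_lapMatrix ℝ)
  have hb' : WithLp.toLp 2 b ∈ LinearMap.range T := by
    rw [← Submodule.orthogonal_orthogonal (LinearMap.range T), hT.orthogonal_range]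
    intro x hx
    have hLx : G.lapMatrix ℝ *ᵥ WithLp.ofLp x = 0 := congr(WithLp.ofLp $hx)
    have hconst := (lapMatrix_mulVec_eq_zero_iff_forall_reachable G).1 hLx
    obtain ⟨k⟩ := hG.nonempty
    simp only [PiLp.inner_apply, RCLike.inner_apply, conj_trivial,
      fun i => hconst i k (hG.preconnected i k), ← Finset.sum_mul, hb, zero_mul]
  obtain ⟨φ, hφ⟩ := hb'
  exact ⟨φ, congr(WithLp.ofLp $hφ)⟩

theorem Connected.exists_lapMatrix_mulVec_eq_and_sum_mul_eq_zero (hG : G.Connected)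
    {b : V → ℝ} (hb : ∑ i, b i = 0) {w : V → ℝ} (hw : ∑ i, w i ≠ 0) :
    ∃ φ, G.lapMatrix ℝ *ᵥ φ = b ∧ ∑ i, w i * φ i = 0 := by
  obtain ⟨φ, hφ⟩ := hG.exists_lapMatrix_mulVec_eq hb
  set c := (∑ i, w i * φ i) / ∑ i, w i
  refine ⟨φ - c • fun _ => 1, ?_, ?_⟩
  · rw [mulVec_sub, mulVec_smul, lapMatrix_mulVec_const_eq_zero, smul_zero, sub_zero, hφ]
  · simp only [Pi.sub_apply, Pi.smul_apply, smul_eq_mul, mul_one, mul_sub, Finset.sum_sub_distrib,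
      ← Finset.sum_mul, c]
    field_simp
    ring

theorem Connected.exists_hasEigenvalue_transitionMatrix_ne_one [Nontrivial V] (hG : G.Connected)
    {x : V → ℝ} (hx0 : x ≠ 0) (hx : ∑ i, (G.degree i : ℝ) * x i = 0) :
    ∃ μ, μ ≠ 1 ∧ HasEigenvalue (toLin' G.transitionMatrix) μ ∧
      x ⬝ᵥ (G.adjMatrix ℝ *ᵥ x) ≤ μ * ∑ i, (G.degree i : ℝ) * x i ^ 2 := by
  have hd : ∀ i, (0 : ℝ) < G.degree i := fun i => by
    exact_mod_cast hG.preconnected.degree_pos_of_nontrivial i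
  have hrev : ∀ i j, (G.degree i : ℝ) * G.transitionMatrix i j
      = G.degree j * G.transitionMatrix j i := fun i j => by
    rw [degree_mul_transitionMatrix, degree_mul_transitionMatrix, (G.isSymm_adjMatrix).apply]
  have horth : ∀ y, G.transitionMatrix *ᵥ y = (1 : ℝ) • y →
      ∑ i, (G.degree i : ℝ) * y i * x i = 0 := by
    intro y hy
    rw [one_smul] at hy
    have hconst := (lapMatrix_mulVec_eq_zero_iff_forall_reachable G).1
      (G.lapMatrix_mulVec_eq_zero_of_transitionMatrix_mulVec_eq_self hy)
    obtain ⟨k⟩ := hG.nonempty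
    simp only [fun i => hconst i k (hG.preconnected i k), mul_comm _ (y k), mul_assoc,
      ← Finset.mul_sum, hx, mul_zero]
  obtain ⟨μ, hμ1, hμ, hray⟩ := exists_hasEigenvalue_ne_of_reversible hd hrev hx0 horth
  refine ⟨μ, hμ1, hμ, le_of_eq_of_le (Finset.sum_congr rfl fun i _ => ?_) hray⟩
  rw [mul_right_comm, mul_comm, degree_mul_transitionMatrix_mulVec]

end SimpleGraph

section Thomson

variable {N : ℕ} {G : SimpleGraph (Fin N)} {s t : Fin N}

theorem sub_le_flowEnergy (f g : Fin N → Fin N → ℝ) :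
    ∑ i, ∑ j, f i j * g i j - flowEnergy g ≤ flowEnergy f := by
  have : 0 ≤ ∑ i, ∑ j, (f i j - g i j) ^ 2 := by positivity
  simp only [sub_sq, Finset.sum_add_distrib, Finset.sum_sub_distrib, mul_assoc,
    ← Finset.mul_sum] at this
  rw [flowEnergy, flowEnergy]
  linarith

theorem IsUnitFlow.sum_mul_sub {f : Fin N → Fin N → ℝ} (hst : s ≠ t) (hf : IsUnitFlow G s t f)
    (ψ : Fin N → ℝ) : ∑ i, ∑ j, f i j * (ψ i - ψ j) = 2 * (ψ s - ψ t) := by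
  obtain ⟨hanti, -, hdiv⟩ := hf
  have hout : ∑ i, ∑ j, f i j * ψ i = ψ s - ψ t := by
    rw [← dotProduct_unitDemand hst ψ]
    exact Finset.sum_congr rfl fun i _ => by rw [← Finset.sum_mul, hdiv, mul_comm]; rfl
  have hin : ∑ i, ∑ j, f i j * ψ j = -(ψ s - ψ t) := by
    rw [Finset.sum_comm, ← hout, ← Finset.sum_neg_distrib]
    refine Finset.sum_congr rfl fun j _ => ?_
    rw [← Finset.sum_neg_distrib]
    exact Finset.sum_congr rfl fun i _ => by rw [hanti, neg_mul]
  simp only [mul_sub, Finset.sum_sub_distrib, hout, hin]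
  ring

variable [DecidableRel G.Adj]

theorem isUnitFlow_potentialFlow {φ : Fin N → ℝ} (hφ : G.lapMatrix ℝ *ᵥ φ = unitDemand s t) :
    IsUnitFlow G s t (G.potentialFlow φ) := by
  refine ⟨fun i j => ?_, fun i j h => if_neg h, fun i => ?_⟩
  · by_cases h : G.Adj i j
    · simp [SimpleGraph.potentialFlow, h, h.symm]
    · simp [SimpleGraph.potentialFlow, h, G.adj_comm j i]
  · rw [G.sum_potentialFlow, hφ, unitDemand]

theorem flowEnergy_potentialFlow (φ : Fin N → ℝ) :
    flowEnergy (G.potentialFlow φ) = φ ⬝ᵥ (G.lapMatrix ℝ *ᵥ φ) := by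
  rw [← toLinearMap₂'_apply', SimpleGraph.lapMatrix_toLinearMap₂', flowEnergy]
  simp only [SimpleGraph.potentialFlow, ite_pow, zero_pow two_ne_zero]

theorem effRes_eq_ofReal (hst : s ≠ t) {φ : Fin N → ℝ}
    (hφ : G.lapMatrix ℝ *ᵥ φ = unitDemand s t) : effRes G s t = ENNReal.ofReal (φ s - φ t) := by
  have henergy : flowEnergy (G.potentialFlow φ) = φ s - φ t := by
    rw [flowEnergy_potentialFlow, hφ, dotProduct_unitDemand hst]
  refine le_antisymm (henergy ▸ iInf₂_le _ (isUnitFlow_potentialFlow hφ)) ?_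
  refine le_iInf₂ fun f hf => ENNReal.ofReal_le_ofReal ?_
  have hpair : ∑ i, ∑ j, f i j * G.potentialFlow φ i j = 2 * (φ s - φ t) := by
    rw [← hf.sum_mul_sub hst φ]
    refine Finset.sum_congr rfl fun i _ => Finset.sum_congr rfl fun j _ => ?_
    by_cases h : G.Adj i j
    · simp [SimpleGraph.potentialFlow, h]
    · simp [SimpleGraph.potentialFlow, h, hf.2.1 i j h]
  linarith [sub_le_flowEnergy f (G.potentialFlow φ)]

end Thomson

theorem sub_sq_le_one_div_add_one_div_mul {a b : ℝ} (ha : 0 < a) (hb : 0 < b) (x y : ℝ) :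
    (x - y) ^ 2 ≤ (1 / a + 1 / b) * (a * x ^ 2 + b * y ^ 2) := by
  have key : (1 / a + 1 / b) * (a * x ^ 2 + b * y ^ 2) - (x - y) ^ 2
      = (a * x + b * y) ^ 2 / (a * b) := by
    field_simp
    ring
  have : 0 ≤ (a * x + b * y) ^ 2 / (a * b) := by positivity
  linarith

theorem one_sub_one_div_mul_le_of_sq_le {R Q σ μ : ℝ} (hR : 0 < R) (hQ : 0 ≤ Q)
    (hRQ : R ^ 2 ≤ σ * Q) (hμ : Q - R ≤ μ * Q) : 1 - 1 / R * σ ≤ μ := by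
  have hQ' : 0 < Q := lt_of_le_of_ne hQ fun h => by rw [← h, mul_zero] at hRQ; nlinarith
  rw [one_div_mul_eq_div, sub_le_comm, le_div_iff₀ hR]
  nlinarith

/-- For a connected graph with unit resistances, the largest absolute value `λ` among
non-top eigenvalues of the transition matrix `P = D⁻¹A` satisfies
`λ ≥ 1 - (1/R_{st})(1/d_s + 1/d_t)`. -/
theorem second_eigenvalue_resistance_bound {N : ℕ} (G : SimpleGraph (Fin N))
    [DecidableRel G.Adj] (hconn : G.Connected) (s t : Fin N) (hst : s ≠ t)
    (lam : ℝ)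
    (hlam : IsGreatest {x : ℝ | ∃ μ : ℝ, μ ≠ 1 ∧ x = |μ| ∧
        Module.End.HasEigenvalue
          (Matrix.toLin'
            (Matrix.of fun i j => (if G.Adj i j then (1 : ℝ) else 0) / (G.degree i))) μ}
      lam) :
    1 - (1 / (effRes G s t).toReal) * (1 / (G.degree s : ℝ) + 1 / (G.degree t : ℝ)) ≤
      lam := by
  have : Nontrivial (Fin N) := ⟨⟨s, t, hst⟩⟩
  have hd : ∀ i, (0 : ℝ) < G.degree i := fun i => by
    exact_mod_cast hconn.preconnected.degree_pos_of_nontrivial i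
  obtain ⟨φ, hφ, hcentered⟩ := hconn.exists_lapMatrix_mulVec_eq_and_sum_mul_eq_zero
    (sum_unitDemand hst) (Finset.sum_pos (fun i _ => hd i) Finset.univ_nonempty).ne'
  have hR : 0 < φ s - φ t := G.sub_pos_of_lapMatrix_mulVec_eq_unitDemand hst hφ
  have hφ0 : φ ≠ 0 := fun h => by simp [h] at hR
  obtain ⟨μ, hμ1, hμ, hray⟩ := hconn.exists_hasEigenvalue_transitionMatrix_ne_one hφ0 hcentered
  rw [G.dotProduct_adjMatrix_mulVec, hφ, dotProduct_unitDemand hst] at hray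
  have hRQ := (sub_sq_le_one_div_add_one_div_mul (hd s) (hd t) (φ s) (φ t)).trans <|
    mul_le_mul_of_nonneg_left (Finset.add_le_sum (f := fun i => (G.degree i : ℝ) * φ i ^ 2)
      (fun i _ => by positivity) (Finset.mem_univ s) (Finset.mem_univ t) hst) (by positivity)
  rw [effRes_eq_ofReal hst hφ, ENNReal.toReal_ofReal hR.le]
  calc _ ≤ μ := one_sub_one_div_mul_le_of_sq_le hR (by positivity) hRQ hray
    _ ≤ |μ| := le_abs_self μ
    _ ≤ lam := hlam.2 ⟨μ, hμ1, rfl, hμ⟩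
end
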